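/- Let T be a finite set of complete trajectories, X a finite set of terminal objects, with each trajectory τ having a terminal object x(τ). Suppose P_F is a probability distribution on T, P_B(·|x) is for each x ∈ X a probability distribution on the trajectories terminating at x, R : X → ℝ_{>0}, and Z > 0. If Z · P_F(τ) = R(x(τ)) · P_B(τ | x(τ)) for every trajectory τ, then for every x ∈ X, the marginal probability P_F^⊤(x) := Σ_{τ : x(τ) = x} P_F(τ) equals R(x)/Z; in particular Z = Σ_{x ∈ X} R(x) and P_F^⊤(x) is proportional to R(x). -/

import Mathlib

/-!
Summing the balance condition over the trajectories ending at `x`, where `P_B (·|x)` has total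
mass one, gives `Z * P_F^⊤ x = R x`; summing this over `x`, where `P_F` has total mass one,
gives `Z = ∑ x, R x`.
-/

open Finset

namespace TrajectoryBalance

variable {T X K : Type*} [Fintype T] [DecidableEq X] [CommSemiring K]

def terminalMarginal (term : T → X) (PF : T → K) (x : X) : K :=
  ∑ τ ∈ univ.filter (fun τ => term τ = x), PF τ

theorem sum_terminalMarginal [Fintype X] (term : T → X) (PF : T → K) :
    ∑ x, terminalMarginal term PF x = ∑ τ, PF τ :=
  sum_fiberwise univ term PF

variable {term : T → X} {PF PB : T → K} {R : X → K} {Z : K}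

theorem mul_terminalMarginal_eq (hTB : ∀ τ, Z * PF τ = R (term τ) * PB τ) {x : X}
    (hPB1 : terminalMarginal term PB x = 1) :
    Z * terminalMarginal term PF x = R x :=
  calc Z * terminalMarginal term PF x
      = ∑ τ ∈ univ.filter (fun τ => term τ = x), R x * PB τ := by
        rw [terminalMarginal, mul_sum]
        refine sum_congr rfl fun τ hτ => ?_
        rw [hTB, (mem_filter.mp hτ).2]
    _ = R x := by rw [← mul_sum, ← terminalMarginal, hPB1, mul_one]

theorem eq_sum_of_balance [Fintype X] (hTB : ∀ τ, Z * PF τ = R (term τ) * PB τ)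
    (hPB1 : ∀ x, terminalMarginal term PB x = 1) (hPF1 : ∑ τ, PF τ = 1) :
    Z = ∑ x, R x :=
  calc Z = Z * ∑ x, terminalMarginal term PF x := by
        rw [sum_terminalMarginal, hPF1, mul_one]
    _ = ∑ x, R x := by
        rw [mul_sum]
        exact sum_congr rfl fun x _ => mul_terminalMarginal_eq hTB (hPB1 x)

end TrajectoryBalance

theorem trajectory_balance_correctness_general {T X : Type*} [Fintype T] [Fintype X]
    [DecidableEq X] (term : T → X) (PF PB : T → ℝ) (R : X → ℝ) (Z : ℝ)
    (hPF1 : ∑ τ, PF τ = 1)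
    (hPB1 : ∀ x : X, ∑ τ ∈ Finset.univ.filter (fun τ => term τ = x), PB τ = 1)
    (hZ : 0 < Z)
    (hTB : ∀ τ, Z * PF τ = R (term τ) * PB τ) :
    (∀ x : X, ∑ τ ∈ Finset.univ.filter (fun τ => term τ = x), PF τ = R x / Z) ∧
      Z = ∑ x : X, R x :=
  ⟨fun x => (eq_div_iff hZ.ne').2 <| by
      rw [mul_comm]
      exact TrajectoryBalance.mul_terminalMarginal_eq hTB (hPB1 x),
    TrajectoryBalance.eq_sum_of_balance hTB hPB1 hPF1⟩

/-- Correctness of the trajectory balance condition: if `Z * P_F τ = R (x τ) * P_B τ`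
for all trajectories `τ`, where `P_F` is a distribution on trajectories, `P_B (·|x)` is a
distribution on trajectories terminating at `x`, `R` is positive and `Z > 0`, then the
forward marginal of every terminal object `x` equals `R x / Z`, and `Z = ∑ x, R x`. -/
theorem trajectory_balance_correctness {T X : Type*} [Fintype T] [Fintype X]
    [DecidableEq X] (term : T → X) (PF PB : T → ℝ) (R : X → ℝ) (Z : ℝ)
    (hPF0 : ∀ τ, 0 ≤ PF τ) (hPF1 : ∑ τ, PF τ = 1)
    (hPB0 : ∀ τ, 0 ≤ PB τ)
    (hPB1 : ∀ x : X, ∑ τ ∈ Finset.univ.filter (fun τ => term τ = x), PB τ = 1)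
    (hR : ∀ x, 0 < R x) (hZ : 0 < Z)
    (hTB : ∀ τ, Z * PF τ = R (term τ) * PB τ) :
    (∀ x : X, ∑ τ ∈ Finset.univ.filter (fun τ => term τ = x), PF τ = R x / Z) ∧
      Z = ∑ x : X, R x :=
  trajectory_balance_correctness_general term PF PB R Z hPF1 hPB1 hZ hTB
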